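/- Suppose μ is absolutely continuous with density w (i.e., μ(dt) = w(t)dt on [0,1]). If (Λ₁, Γ₁, c₁, d₁, ρ₁) and (Λ₂, Γ₂, c₂, d₂, ρ₂), with Λᵢ, Γᵢ absolutely continuous and cᵢ > 0, both solve the ODE system: for a.e. p ∈ [0,1], min{ max{ Γᵢ'(p) − h(p), Λᵢ(p) }, Γᵢ'(p) } = 0 and Λᵢ'(p) = 2σ(q(p) − Γᵢ(p)) + ρᵢ − cᵢ·u'(dᵢ − Γᵢ(p))·w(1−p), together with Λᵢ(0) = 1 − θ, Λᵢ(1) = 0, Γᵢ(0) = 0, ol(Γᵢ) = dᵢ, and ρᵢ = θ + 2σ∫₀¹ Γᵢ(t)dt − 2σ∫₀¹ q(t)dt, then Λ₁ = Λ₂, Γ₁ = Γ₂, c₁ = c₂, d₁ = d₂ and ρ₁ = ρ₂. -/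

import Mathlib

open MeasureTheory Set

/-- The mean-variance operator `ol` from the paper. -/
noncomputable def ol (σ θ k : ℝ) (q f : ℝ → ℝ) : ℝ :=
  σ * (∫ t in (0:ℝ)..1, f t) ^ 2 - σ * (∫ t in (0:ℝ)..1, (f t) ^ 2)
    + 2 * σ * (∫ t in (0:ℝ)..1, q t * f t)
    + (θ - 2 * σ * (∫ t in (0:ℝ)..1, q t)) * (∫ t in (0:ℝ)..1, f t) + k

/-- Membership in the admissible class `𝒢`: `G(p) = ∫₀ᵖ g(t)dt` on `[0,1]`
for some measurable `g` with `0 ≤ g ≤ h` a.e. on `[0,1]`. -/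
def InG (h G : ℝ → ℝ) : Prop :=
  ∃ g : ℝ → ℝ, Measurable g ∧
    (∀ᵐ t ∂(volume.restrict (Icc (0:ℝ) 1)), 0 ≤ g t ∧ g t ≤ h t) ∧
    ∀ p ∈ Icc (0:ℝ) 1, G p = ∫ t in (0:ℝ)..p, g t

/-- The objective `J(G) = ∫_{[0,1]} u(ol(G) − G(1−p)) μ(dp)`. -/
noncomputable def J (σ θ k : ℝ) (q u : ℝ → ℝ) (μ : Measure ℝ) (G : ℝ → ℝ) : ℝ :=
  ∫ p in Icc (0:ℝ) 1, u (ol σ θ k q G - G (1 - p)) ∂μ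

/-- The distribution function `Φ(p)` built from an optimal candidate `G`. -/
noncomputable def Phi (σ θ k : ℝ) (q u : ℝ → ℝ) (μ : Measure ℝ) (G : ℝ → ℝ) (p : ℝ) : ℝ :=
  (∫ t in Ioc (1 - p) 1, deriv u (ol σ θ k q G - G (1 - t)) ∂μ) /
  (∫ t in Icc (0:ℝ) 1, deriv u (ol σ θ k q G - G (1 - t)) ∂μ)

/-- The function `Ψ` built from an optimal candidate `G`. -/
noncomputable def PsiOf (σ θ : ℝ) (q G : ℝ → ℝ) (p : ℝ) : ℝ :=
  (2 * σ * (∫ t in (0:ℝ)..1, G t) + θ - 2 * σ * (∫ t in (0:ℝ)..1, q t)) * (p - 1)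
    + 2 * σ * (∫ t in p..(1:ℝ), (G t - q t)) + 1

/-- The nonlocal operator `Φ_c[f](p)`. -/
noncomputable def PhiC (σ θ k : ℝ) (q u : ℝ → ℝ) (μ : Measure ℝ) (f : ℝ → ℝ) : ℝ → ℝ :=
  Phi σ θ k q u μ (fun s => q s + (f 0 - f s) / (2 * σ))

/-- `Ψ ∈ C²⁻([0,1])` with first derivative `Ψd` and a.e. second derivative `Ψdd`:
`Ψ` is differentiable on `[0,1]` with derivative `Ψd`, and `Ψd` is absolutely
continuous on `[0,1]` with a.e. derivative `Ψdd`. -/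
def C2m (Ψ Ψd Ψdd : ℝ → ℝ) : Prop :=
  (∀ p ∈ Icc (0:ℝ) 1, HasDerivWithinAt Ψ (Ψd p) (Icc (0:ℝ) 1) p) ∧
  IntegrableOn Ψdd (Icc (0:ℝ) 1) ∧
  (∀ p ∈ Icc (0:ℝ) 1, Ψd p = Ψd 0 + ∫ t in (0:ℝ)..p, Ψdd t)

/-- The ODE system (4.16) of the paper: `Λ, Γ` absolutely continuous on `[0,1]`
with a.e. derivatives `Λd, Γd`, satisfying the double-obstacle ODE, the ODE for `Λ`,
and the boundary/consistency conditions. -/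
def ODESys (σ θ k : ℝ) (q h u w : ℝ → ℝ) (Λ Γ Λd Γd : ℝ → ℝ) (c d ρ : ℝ) : Prop :=
  IntegrableOn Λd (Icc (0:ℝ) 1) ∧ IntegrableOn Γd (Icc (0:ℝ) 1) ∧
  (∀ p ∈ Icc (0:ℝ) 1, Λ p = Λ 0 + ∫ t in (0:ℝ)..p, Λd t) ∧
  (∀ p ∈ Icc (0:ℝ) 1, Γ p = Γ 0 + ∫ t in (0:ℝ)..p, Γd t) ∧
  (∀ᵐ p ∂(volume.restrict (Icc (0:ℝ) 1)),
    min (max (Γd p - h p) (Λ p)) (Γd p) = 0 ∧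
    Λd p = 2 * σ * (q p - Γ p) + ρ - c * deriv u (d - Γ p) * w (1 - p)) ∧
  Λ 0 = 1 - θ ∧ Λ 1 = 0 ∧ Γ 0 = 0 ∧ ol σ θ k q Γ = d ∧
  ρ = θ + 2 * σ * (∫ t in (0:ℝ)..1, Γ t) - 2 * σ * (∫ t in (0:ℝ)..1, q t)


lemma real_obstacle {x l hh : ℝ} (hh0 : 0 ≤ hh) (heq : min (max (x - hh) l) x = 0) :
    0 ≤ x ∧ x ≤ hh ∧ (0 < l → x = 0) ∧ (l < 0 → x = hh) := by
  have h1 : (0:ℝ) ≤ x := by rw [← heq]; exact min_le_right _ _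
  have h2 : (0:ℝ) ≤ max (x - hh) l := by rw [← heq]; exact min_le_left _ _
  have h3 : x ≤ hh := by
    by_contra hc
    push_neg at hc
    have hp : 0 < x - hh := by linarith
    have : 0 < min (max (x - hh) l) x :=
      lt_min (lt_of_lt_of_le hp (le_max_left _ _)) (by linarith)
    linarith [heq ▸ this]
  refine ⟨h1, h3, ?_, ?_⟩
  · intro hl
    by_contra hx
    have hxpos : 0 < x := lt_of_le_of_ne h1 (Ne.symm hx)
    have : 0 < min (max (x - hh) l) x := lt_min (lt_of_lt_of_le hl (le_max_right _ _)) hxpos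
    linarith [heq ▸ this]
  · intro hl
    rcases le_max_iff.mp h2 with hxh | hll
    · linarith
    · linarith

lemma concave_tangent {u : ℝ → ℝ} (hu : ConcaveOn ℝ univ u) (hd : Differentiable ℝ u)
    (x y : ℝ) : u y ≤ u x + deriv u x * (y - x) := by
  rcases lt_trichotomy x y with hxy | rfl | hyx
  · have h := hu.slope_le_deriv (mem_univ x) (mem_univ y) hxy (hd x)
    rw [slope_def_field] at h
    have h2 : u y - u x ≤ deriv u x * (y - x) := by
      have h3 := mul_le_mul_of_nonneg_right h (le_of_lt (sub_pos.mpr hxy))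
      rwa [div_mul_cancel₀] at h3
      exact sub_ne_zero.mpr hxy.ne'
    linarith
  · simp
  · have h := hu.deriv_le_slope (mem_univ y) (mem_univ x) hyx (hd x)
    rw [slope_def_field] at h
    have h2 : deriv u x * (x - y) ≤ u x - u y := by
      have h3 := mul_le_mul_of_nonneg_right h (le_of_lt (sub_pos.mpr hyx))
      rwa [div_mul_cancel₀] at h3
      exact sub_ne_zero.mpr hyx.ne'
    nlinarith [h2]

lemma ae_const_of_contOn {f : ℝ → ℝ} {m : ℝ}
    (hf : ContinuousOn f (Icc (0:ℝ) 1))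
    (h : ∀ᵐ x ∂(volume.restrict (Ioc (0:ℝ) 1)), f x = m) :
    ∀ p ∈ Icc (0:ℝ) 1, f p = m := by
  intro p hp
  by_contra hne
  set ε := |f p - m| with hε
  have hεpos : 0 < ε := abs_pos.mpr (sub_ne_zero.mpr hne)
  have hcont := hf p hp
  rw [ContinuousWithinAt, Metric.tendsto_nhdsWithin_nhds] at hcont
  obtain ⟨δ, hδpos, hδ⟩ := hcont ε hεpos
  -- the set of x in Icc ∩ ball p δ has f x ≠ m
  have hsub : Icc (0:ℝ) 1 ∩ Metric.ball p δ ⊆ {x | f x ≠ m} := by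
    intro x ⟨hx1, hx2⟩
    have := hδ hx1 (Metric.mem_ball.mp hx2)
    intro hfx
    rw [hfx] at this
    rw [Real.dist_eq] at this
    simp only [hε] at this
    rw [abs_sub_comm] at this
    exact lt_irrefl _ this
  -- Ioc version
  have hsub2 : Ioc (0:ℝ) 1 ∩ Metric.ball p δ ⊆ {x | f x ≠ m} :=
    fun x hx => hsub ⟨Ioc_subset_Icc_self hx.1, hx.2⟩
  -- null set
  have hnull : volume ({x | f x ≠ m} ∩ Ioc (0:ℝ) 1) = 0 := by
    rw [ae_iff] at h
    rw [Measure.restrict_apply₀' measurableSet_Ioc.nullMeasurableSet] at h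
    convert h using 2
  have hsubnull : volume (Ioc (0:ℝ) 1 ∩ Metric.ball p δ) = 0 := by
    refine measure_mono_null ?_ hnull
    intro x hx
    exact ⟨hsub2 hx, hx.1⟩
  -- but positive measure
  have hpos : 0 < volume (Ioc (0:ℝ) 1 ∩ Metric.ball p δ) := by
    have hball : Metric.ball p δ = Ioo (p - δ) (p + δ) := Real.ball_eq_Ioo p δ
    rw [hball]
    have : Ioo (max 0 (p - δ)) (min 1 (p + δ)) ⊆ Ioc (0:ℝ) 1 ∩ Ioo (p - δ) (p + δ) := by
      intro x hx
      simp only [mem_Ioo, max_lt_iff, lt_min_iff] at hx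
      exact ⟨⟨hx.1.1, le_of_lt hx.2.1⟩, hx.1.2, hx.2.2⟩
    refine lt_of_lt_of_le ?_ (measure_mono this)
    rw [Real.volume_Ioo]
    have h01 : max 0 (p - δ) < min 1 (p + δ) := by
      obtain ⟨hp0, hp1⟩ := hp
      rcases lt_or_ge p 1 with hl | hl
      · apply max_lt <;> apply lt_min <;> linarith
      · have hpe : p = 1 := le_antisymm hp1 hl
        subst hpe
        apply max_lt <;> apply lt_min <;> linarith
    simp [ENNReal.ofReal_pos, h01]
  rw [hsubnull] at hpos
  exact lt_irrefl _ hpos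


lemma ibp (φ φd g : ℝ → ℝ) (hφd : IntegrableOn φd (Icc (0:ℝ) 1))
    (hg : IntegrableOn g (Icc (0:ℝ) 1))
    (hφrep : ∀ p ∈ Icc (0:ℝ) 1, φ p = φ 0 + ∫ t in (0:ℝ)..p, φd t) :
    ∫ p in Ioc (0:ℝ) 1, φd p * (∫ t in (0:ℝ)..p, g t)
      = ∫ t in Ioc (0:ℝ) 1, g t * (φ 1 - φ t) := by
  have hφdν : IntegrableOn φd (Ioc (0:ℝ) 1) := hφd.mono_set Ioc_subset_Icc_self
  have hgν : IntegrableOn g (Ioc (0:ℝ) 1) := hg.mono_set Ioc_subset_Icc_self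
  have hprim : ∀ p ∈ Ioc (0:ℝ) 1,
      (∫ t in (0:ℝ)..p, g t) = ∫ t in Ioc (0:ℝ) 1, (Iic p).indicator g t := by
    intro p hp
    rw [intervalIntegral.integral_of_le hp.1.le,
      integral_indicator measurableSet_Iic,
      Measure.restrict_restrict measurableSet_Iic]
    have hset : Iic p ∩ Ioc (0:ℝ) 1 = Ioc 0 p := by
      ext x
      simp only [mem_inter_iff, mem_Iic, mem_Ioc]
      constructor
      · rintro ⟨hxp, hx0, _⟩; exact ⟨hx0, hxp⟩
      · rintro ⟨hx0, hxp⟩; exact ⟨hxp, hx0, hxp.trans hp.2⟩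
    rw [hset]
  have hleft : ∫ p in Ioc (0:ℝ) 1, φd p * (∫ t in (0:ℝ)..p, g t)
      = ∫ p in Ioc (0:ℝ) 1, (∫ t in Ioc (0:ℝ) 1, φd p * (Iic p).indicator g t) := by
    refine setIntegral_congr_fun measurableSet_Ioc (fun p hp => ?_)
    rw [integral_const_mul, ← hprim p hp]
  have hS : MeasurableSet {z : ℝ × ℝ | z.2 ≤ z.1} :=
    (isClosed_le continuous_snd continuous_fst).measurableSet
  have hG : Integrable (fun z : ℝ × ℝ => φd z.1 * g z.2)
      ((volume.restrict (Ioc (0:ℝ) 1)).prod (volume.restrict (Ioc (0:ℝ) 1))) :=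
    hφdν.mul_prod hgν
  have hF : Integrable (Function.uncurry fun p t => φd p * (Iic p).indicator g t)
      ((volume.restrict (Ioc (0:ℝ) 1)).prod (volume.restrict (Ioc (0:ℝ) 1))) := by
    have heq : (Function.uncurry fun p t => φd p * (Iic p).indicator g t)
        = Set.indicator {z : ℝ × ℝ | z.2 ≤ z.1} (fun z : ℝ × ℝ => φd z.1 * g z.2) := by
      funext z
      rcases z with ⟨p, t⟩
      by_cases ht : t ≤ p
      · rw [Function.uncurry]
        simp only [indicator_of_mem (mem_Iic.mpr ht)]
        rw [indicator_of_mem (by exact ht : (p, t) ∈ {z : ℝ × ℝ | z.2 ≤ z.1})]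
      · rw [Function.uncurry]
        simp only [indicator_of_notMem (fun hc => ht (mem_Iic.mp hc)), mul_zero]
        rw [indicator_of_notMem (by exact ht : (p, t) ∉ {z : ℝ × ℝ | z.2 ≤ z.1})]
    rw [heq]
    exact hG.indicator hS
  have hswap := integral_integral_swap hF
  have hinner : ∀ t ∈ Ioc (0:ℝ) 1,
      (∫ p in Ioc (0:ℝ) 1, φd p * (Iic p).indicator g t) = g t * (φ 1 - φ t) := by
    intro t ht
    have heqf : (fun p => φd p * (Iic p).indicator g t)
        = (Ici t).indicator (fun p => φd p * g t) := by
      funext p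
      by_cases htp : t ≤ p
      · rw [indicator_of_mem (mem_Ici.mpr htp), indicator_of_mem (mem_Iic.mpr htp)]
      · rw [indicator_of_notMem (fun hc => htp (mem_Ici.mp hc)),
          indicator_of_notMem (fun hc => htp (mem_Iic.mp hc)), mul_zero]
    rw [heqf, integral_indicator measurableSet_Ici,
      Measure.restrict_restrict measurableSet_Ici]
    have hset : Ici t ∩ Ioc (0:ℝ) 1 = Icc t 1 := by
      ext x
      simp only [mem_inter_iff, mem_Ici, mem_Ioc, mem_Icc]
      constructor
      · rintro ⟨htx, _, hx1⟩; exact ⟨htx, hx1⟩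
      · rintro ⟨htx, hx1⟩; exact ⟨htx, ht.1.trans_le htx, hx1⟩
    rw [hset, integral_mul_const, integral_Icc_eq_integral_Ioc]
    have hii1 : IntervalIntegrable φd volume 0 1 :=
      (intervalIntegrable_iff_integrableOn_Ioc_of_le zero_le_one).mpr hφdν
    have hii2 : IntervalIntegrable φd volume 0 t :=
      (intervalIntegrable_iff_integrableOn_Ioc_of_le ht.1.le).mpr
        (hφd.mono_set (fun x hx => ⟨hx.1.le, hx.2.trans ht.2⟩))
    have h4 := intervalIntegral.integral_interval_sub_left hii1 hii2
    have h1 := hφrep 1 (by norm_num)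
    have h2 := hφrep t (Ioc_subset_Icc_self ht)
    have h5 : ∫ x in t..1, φd x = φ 1 - φ t := by rw [← h4]; linarith
    rw [← intervalIntegral.integral_of_le ht.2, h5]
    ring
  rw [hleft, hswap]
  exact setIntegral_congr_fun measurableSet_Ioc hinner

set_option maxHeartbeats 1600000 in
lemma key_ineq (σ θ k : ℝ) (hσ : 0 < σ)
    (q h u w : ℝ → ℝ)
    (hh_nonneg : ∀ᵐ t ∂(volume.restrict (Icc (0:ℝ) 1)), 0 ≤ h t)
    (hq_cont : ContinuousOn q (Icc (0:ℝ) 1))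
    (hu_conc : ConcaveOn ℝ univ u) (hu_diff : Differentiable ℝ u)
    (hw_int : IntegrableOn (fun p => w (1 - p)) (Ioc (0:ℝ) 1))
    (hw_nonneg : ∀ᵐ p ∂(volume.restrict (Ioc (0:ℝ) 1)), 0 ≤ w (1 - p))
    (Λ Γ Λd Γd : ℝ → ℝ) (c d ρ : ℝ) (hc : 0 < c)
    (hsys : ODESys σ θ k q h u w Λ Γ Λd Γd c d ρ)
    (Λ' Γ' Λd' Γd' : ℝ → ℝ) (c' d' ρ' : ℝ)
    (hsys' : ODESys σ θ k q h u w Λ' Γ' Λd' Γd' c' d' ρ') :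
    (∫ p in Ioc (0:ℝ) 1, w (1 - p) * u (d' - Γ' p)) -
      (∫ p in Ioc (0:ℝ) 1, w (1 - p) * u (d - Γ p))
      ≤ (σ * (∫ p in Ioc (0:ℝ) 1, (Γ' p - Γ p)) ^ 2
          - σ * ∫ p in Ioc (0:ℝ) 1, (Γ' p - Γ p) ^ 2) / c := by
  obtain ⟨hΛd_int, hΓd_int, hΛrep, hΓrep, hae, hΛ0, hΛ1, hΓ0, hol, hρ⟩ := hsys
  obtain ⟨hΛd_int', hΓd_int', hΛrep', hΓrep', hae', hΛ0', hΛ1', hΓ0', hol', hρ'⟩ := hsys'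
  simp only [ol] at hol hol'
  have huIcc : uIcc (0:ℝ) 1 = Icc 0 1 := uIcc_of_le zero_le_one
  -- continuity of Γ, Γ'
  have hΓcont : ContinuousOn Γ (Icc (0:ℝ) 1) := by
    have h1 : ContinuousOn (fun p => Γ 0 + ∫ t in (0:ℝ)..p, Γd t) (Icc (0:ℝ) 1) := by
      refine continuousOn_const.add ?_
      have := intervalIntegral.continuousOn_primitive_interval (huIcc ▸ hΓd_int)
      rwa [huIcc] at this
    exact h1.congr hΓrep
  have hΓcont' : ContinuousOn Γ' (Icc (0:ℝ) 1) := by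
    have h1 : ContinuousOn (fun p => Γ' 0 + ∫ t in (0:ℝ)..p, Γd' t) (Icc (0:ℝ) 1) := by
      refine continuousOn_const.add ?_
      have := intervalIntegral.continuousOn_primitive_interval (huIcc ▸ hΓd_int')
      rwa [huIcc] at this
    exact h1.congr hΓrep'
  -- integrability of continuous things on Ioc 0 1
  have hq_i : IntegrableOn q (Ioc (0:ℝ) 1) :=
    (hq_cont.integrableOn_Icc).mono_set Ioc_subset_Icc_self
  have hΓ_i : IntegrableOn Γ (Ioc (0:ℝ) 1) :=
    (hΓcont.integrableOn_Icc).mono_set Ioc_subset_Icc_self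
  have hΓ'_i : IntegrableOn Γ' (Ioc (0:ℝ) 1) :=
    (hΓcont'.integrableOn_Icc).mono_set Ioc_subset_Icc_self
  have hΛd_i : IntegrableOn Λd (Ioc (0:ℝ) 1) := hΛd_int.mono_set Ioc_subset_Icc_self
  have hqmΓ_i : IntegrableOn (fun p => q p - Γ p) (Ioc (0:ℝ) 1) := hq_i.sub hΓ_i
  have h2σ_i : IntegrableOn (fun p => 2 * σ * (q p - Γ p)) (Ioc (0:ℝ) 1) :=
    hqmΓ_i.const_mul (2 * σ)
  have hρconst_i : IntegrableOn (fun _ : ℝ => ρ) (Ioc (0:ℝ) 1) :=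
    integrableOn_const (by simp)
  have hA_i : IntegrableOn (fun p => 2 * σ * (q p - Γ p) + ρ) (Ioc (0:ℝ) 1) :=
    h2σ_i.add hρconst_i
  have hW_i : IntegrableOn (fun p => (2 * σ * (q p - Γ p) + ρ) - Λd p) (Ioc (0:ℝ) 1) :=
    hA_i.sub hΛd_i
  -- interval integral conversion
  have ic : ∀ f : ℝ → ℝ, (∫ t in (0:ℝ)..1, f t) = ∫ t in Ioc (0:ℝ) 1, f t := fun f =>
    intervalIntegral.integral_of_le zero_le_one
  -- total of Λd
  have hΛd_tot : ∫ t in Ioc (0:ℝ) 1, Λd t = θ - 1 := by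
    have h1 := hΛrep 1 (by norm_num)
    rw [ic] at h1
    rw [hΛ1, hΛ0] at h1
    linarith
  -- measure of Ioc is 1
  have hmass : (volume (Ioc (0:ℝ) 1)).toReal = 1 := by
    rw [Real.volume_Ioc]
    norm_num
  -- total of A
  have hA_tot : ∫ p in Ioc (0:ℝ) 1, (2 * σ * (q p - Γ p) + ρ) = θ := by
    have hs : ∫ p in Ioc (0:ℝ) 1, (2 * σ * (q p - Γ p) + ρ)
        = (∫ p in Ioc (0:ℝ) 1, 2 * σ * (q p - Γ p)) + ∫ _p in Ioc (0:ℝ) 1, ρ :=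
      integral_add h2σ_i hρconst_i
    rw [hs, integral_const_mul, integral_sub hq_i hΓ_i, setIntegral_const, measureReal_def, hmass]
    rw [hρ, ic Γ, ic q]
    simp only [smul_eq_mul, one_mul]
    ring
  have hW_tot : ∫ p in Ioc (0:ℝ) 1, ((2 * σ * (q p - Γ p) + ρ) - Λd p) = 1 := by
    have hs : ∫ p in Ioc (0:ℝ) 1, ((2 * σ * (q p - Γ p) + ρ) - Λd p)
        = (∫ p in Ioc (0:ℝ) 1, (2 * σ * (q p - Γ p) + ρ)) - ∫ p in Ioc (0:ℝ) 1, Λd p :=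
      integral_sub hA_i hΛd_i
    rw [hs, hA_tot, hΛd_tot]; ring
  -- a.e. facts restricted to Ioc
  have haeν := ae_restrict_of_ae_restrict_of_subset Ioc_subset_Icc_self hae
  have hae'ν := ae_restrict_of_ae_restrict_of_subset Ioc_subset_Icc_self hae'
  have hh0ν := ae_restrict_of_ae_restrict_of_subset Ioc_subset_Icc_self hh_nonneg
  -- bounded * integrable
  have hbdd : ∀ f : ℝ → ℝ, ContinuousOn f (Icc (0:ℝ) 1) → ∀ g : ℝ → ℝ,
      IntegrableOn g (Ioc (0:ℝ) 1) → IntegrableOn (fun p => f p * g p) (Ioc (0:ℝ) 1) := by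
    intro f hf g hg
    obtain ⟨C, hC⟩ := isCompact_Icc.exists_bound_of_continuousOn hf
    exact Integrable.bdd_mul (c := C) hg
      ((hf.mono Ioc_subset_Icc_self).aestronglyMeasurable measurableSet_Ioc)
      (by filter_upwards [ae_restrict_mem measurableSet_Ioc] with p hp
          exact hC p (Ioc_subset_Icc_self hp))
  have hU : ContinuousOn (fun p => u (d - Γ p)) (Icc (0:ℝ) 1) :=
    hu_diff.continuous.comp_continuousOn (continuousOn_const.sub hΓcont)
  have hU' : ContinuousOn (fun p => u (d' - Γ' p)) (Icc (0:ℝ) 1) :=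
    hu_diff.continuous.comp_continuousOn (continuousOn_const.sub hΓcont')
  have hΔcont : ContinuousOn (fun p => Γ' p - Γ p) (Icc (0:ℝ) 1) := hΓcont'.sub hΓcont
  have hK_i : IntegrableOn (fun p => w (1 - p) * u (d - Γ p)) (Ioc (0:ℝ) 1) := by
    rw [show (fun p => w (1 - p) * u (d - Γ p)) = (fun p => u (d - Γ p) * w (1 - p))
      from funext fun p => mul_comm _ _]
    exact hbdd _ hU _ hw_int
  have hK'_i : IntegrableOn (fun p => w (1 - p) * u (d' - Γ' p)) (Ioc (0:ℝ) 1) := by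
    rw [show (fun p => w (1 - p) * u (d' - Γ' p)) = (fun p => u (d' - Γ' p) * w (1 - p))
      from funext fun p => mul_comm _ _]
    exact hbdd _ hU' _ hw_int
  have hΔW_i : IntegrableOn
      (fun p => (Γ' p - Γ p) * ((2 * σ * (q p - Γ p) + ρ) - Λd p)) (Ioc (0:ℝ) 1) :=
    hbdd _ hΔcont _ hW_i
  have hRHS_i : IntegrableOn
      (fun p => (((2 * σ * (q p - Γ p) + ρ) - Λd p) * ((d' - d) - (Γ' p - Γ p))) / c)
      (Ioc (0:ℝ) 1) := by
    have h1 : IntegrableOn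
        (fun p => ((d' - d) - (Γ' p - Γ p)) * ((2 * σ * (q p - Γ p) + ρ) - Λd p))
        (Ioc (0:ℝ) 1) := hbdd _ (continuousOn_const.sub hΔcont) _ hW_i
    have h2 := h1.const_mul (1 / c)
    rw [show (fun p => (((2 * σ * (q p - Γ p) + ρ) - Λd p) * ((d' - d) - (Γ' p - Γ p))) / c)
      = (fun p => (1 / c) * (((d' - d) - (Γ' p - Γ p)) * ((2 * σ * (q p - Γ p) + ρ) - Λd p)))
      from funext fun p => by ring]
    exact h2
  -- Step 1: pointwise concavity inequality
  have hstep1 : ∀ᵐ p ∂(volume.restrict (Ioc (0:ℝ) 1)),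
      w (1 - p) * u (d' - Γ' p) - w (1 - p) * u (d - Γ p)
        ≤ (((2 * σ * (q p - Γ p) + ρ) - Λd p) * ((d' - d) - (Γ' p - Γ p))) / c := by
    filter_upwards [haeν, hw_nonneg] with p hobs hw0
    obtain ⟨_, hode⟩ := hobs
    have ht := concave_tangent hu_conc hu_diff (d - Γ p) (d' - Γ' p)
    have h2 : u (d' - Γ' p) - u (d - Γ p)
        ≤ deriv u (d - Γ p) * ((d' - d) - (Γ' p - Γ p)) := by
      have hz : (d' - Γ' p) - (d - Γ p) = (d' - d) - (Γ' p - Γ p) := by ring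
      calc u (d' - Γ' p) - u (d - Γ p) ≤ deriv u (d - Γ p) * ((d' - Γ' p) - (d - Γ p)) := by
            linarith
        _ = deriv u (d - Γ p) * ((d' - d) - (Γ' p - Γ p)) := by rw [hz]
    have h3 := mul_le_mul_of_nonneg_left h2 hw0
    have hWp : (2 * σ * (q p - Γ p) + ρ) - Λd p
        = c * (deriv u (d - Γ p) * w (1 - p)) := by rw [hode]; ring
    have h4 : (((2 * σ * (q p - Γ p) + ρ) - Λd p) * ((d' - d) - (Γ' p - Γ p))) / c
        = w (1 - p) * (deriv u (d - Γ p) * ((d' - d) - (Γ' p - Γ p))) := by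
      rw [hWp]; field_simp
    rw [h4]
    linarith
  have hKsub_i : IntegrableOn
      (fun p => w (1 - p) * u (d' - Γ' p) - w (1 - p) * u (d - Γ p)) (Ioc (0:ℝ) 1) :=
    hK'_i.sub hK_i
  have hmono := integral_mono_ae hKsub_i hRHS_i hstep1
  have hsplitK : ∫ p in Ioc (0:ℝ) 1,
      (w (1 - p) * u (d' - Γ' p) - w (1 - p) * u (d - Γ p))
      = (∫ p in Ioc (0:ℝ) 1, w (1 - p) * u (d' - Γ' p))
        - ∫ p in Ioc (0:ℝ) 1, w (1 - p) * u (d - Γ p) := integral_sub hK'_i hK_i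
  rw [hsplitK] at hmono
  -- compute RHS integral
  have hRHSval : ∫ p in Ioc (0:ℝ) 1,
      (((2 * σ * (q p - Γ p) + ρ) - Λd p) * ((d' - d) - (Γ' p - Γ p))) / c
      = (1 / c) * (1 * (d' - d)
          - ∫ p in Ioc (0:ℝ) 1, (Γ' p - Γ p) * ((2 * σ * (q p - Γ p) + ρ) - Λd p)) := by
    rw [show (fun p => (((2 * σ * (q p - Γ p) + ρ) - Λd p) * ((d' - d) - (Γ' p - Γ p))) / c)
      = (fun p => (1 / c) * (((2 * σ * (q p - Γ p) + ρ) - Λd p) * (d' - d)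
          - (Γ' p - Γ p) * ((2 * σ * (q p - Γ p) + ρ) - Λd p)))
      from funext fun p => by ring]
    have hWd_i : IntegrableOn (fun p => ((2 * σ * (q p - Γ p) + ρ) - Λd p) * (d' - d))
        (Ioc (0:ℝ) 1) := hW_i.mul_const _
    have hs : ∫ p in Ioc (0:ℝ) 1, (((2 * σ * (q p - Γ p) + ρ) - Λd p) * (d' - d)
          - (Γ' p - Γ p) * ((2 * σ * (q p - Γ p) + ρ) - Λd p))
        = (∫ p in Ioc (0:ℝ) 1, ((2 * σ * (q p - Γ p) + ρ) - Λd p) * (d' - d))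
          - ∫ p in Ioc (0:ℝ) 1, (Γ' p - Γ p) * ((2 * σ * (q p - Γ p) + ρ) - Λd p) :=
      integral_sub hWd_i hΔW_i
    rw [integral_const_mul, hs, integral_mul_const, hW_tot]
  -- split ΔW = ΔA - ΔΛd
  have hΔA_i : IntegrableOn (fun p => (Γ' p - Γ p) * (2 * σ * (q p - Γ p) + ρ))
      (Ioc (0:ℝ) 1) := hbdd _ hΔcont _ hA_i
  have hΔΛd_i : IntegrableOn (fun p => (Γ' p - Γ p) * Λd p) (Ioc (0:ℝ) 1) :=
    hbdd _ hΔcont _ hΛd_i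
  have hΔW_split : ∫ p in Ioc (0:ℝ) 1, (Γ' p - Γ p) * ((2 * σ * (q p - Γ p) + ρ) - Λd p)
      = (∫ p in Ioc (0:ℝ) 1, (Γ' p - Γ p) * (2 * σ * (q p - Γ p) + ρ))
        - ∫ p in Ioc (0:ℝ) 1, (Γ' p - Γ p) * Λd p := by
    have hs : ∫ p in Ioc (0:ℝ) 1, (Γ' p - Γ p) * ((2 * σ * (q p - Γ p) + ρ) - Λd p)
        = ∫ p in Ioc (0:ℝ) 1, ((Γ' p - Γ p) * (2 * σ * (q p - Γ p) + ρ)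
            - (Γ' p - Γ p) * Λd p) :=
      setIntegral_congr_fun measurableSet_Ioc (fun p _ => by ring)
    rw [hs]
    exact integral_sub hΔA_i hΔΛd_i
  -- integration by parts for ∫ Δ Λd
  have hΔrep : ∀ p ∈ Ioc (0:ℝ) 1, Γ' p - Γ p = ∫ t in (0:ℝ)..p, (Γd' t - Γd t) := by
    intro p hp
    have hii : IntervalIntegrable Γd volume 0 p :=
      (intervalIntegrable_iff_integrableOn_Ioc_of_le hp.1.le).mpr
        (hΓd_int.mono_set (fun x hx => ⟨hx.1.le, hx.2.trans hp.2⟩))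
    have hii' : IntervalIntegrable Γd' volume 0 p :=
      (intervalIntegrable_iff_integrableOn_Ioc_of_le hp.1.le).mpr
        (hΓd_int'.mono_set (fun x hx => ⟨hx.1.le, hx.2.trans hp.2⟩))
    rw [intervalIntegral.integral_sub hii' hii]
    have h1 := hΓrep p (Ioc_subset_Icc_self hp)
    have h2 := hΓrep' p (Ioc_subset_Icc_self hp)
    rw [hΓ0] at h1
    rw [hΓ0'] at h2
    linarith
  have hIBP : ∫ p in Ioc (0:ℝ) 1, (Γ' p - Γ p) * Λd p
      = ∫ t in Ioc (0:ℝ) 1, (Γd' t - Γd t) * (Λ 1 - Λ t) := by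
    rw [← ibp Λ Λd (fun t => Γd' t - Γd t) hΛd_int (hΓd_int'.sub hΓd_int) hΛrep]
    exact setIntegral_congr_fun measurableSet_Ioc
      (fun p hp => by rw [hΔrep p hp]; ring)
  -- sign of the IBP term
  have hsign : ∫ t in Ioc (0:ℝ) 1, (Γd' t - Γd t) * (Λ 1 - Λ t) ≤ 0 := by
    apply integral_nonpos_of_ae
    filter_upwards [haeν, hae'ν, hh0ν] with t hobs hobs' hh0
    simp only [Pi.zero_apply]
    obtain ⟨ho, _⟩ := hobs
    obtain ⟨ho', _⟩ := hobs'
    obtain ⟨hx0, hxh, hpos0, hneg0⟩ := real_obstacle hh0 ho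
    obtain ⟨hx0', hxh', _, _⟩ := real_obstacle hh0 ho'
    rw [hΛ1]
    rcases lt_trichotomy (Λ t) 0 with hl | hl | hl
    · have hg := hneg0 hl
      rw [hg]
      nlinarith [mul_nonneg (sub_nonneg.mpr hxh') (neg_nonneg.mpr hl.le)]
    · simp [hl]
    · have hg := hpos0 hl
      rw [hg]
      nlinarith [mul_nonneg hx0' hl.le]
  -- expansion of d' - d
  rw [ic Γ, ic (fun t => (Γ t) ^ 2), ic (fun t => q t * Γ t), ic q] at hol
  rw [ic Γ', ic (fun t => (Γ' t) ^ 2), ic (fun t => q t * Γ' t), ic q] at hol'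
  rw [ic Γ, ic q] at hρ
  set IΓ := ∫ t in Ioc (0:ℝ) 1, Γ t with hIΓ
  set IΓ' := ∫ t in Ioc (0:ℝ) 1, Γ' t with hIΓ'
  set Iq := ∫ t in Ioc (0:ℝ) 1, q t with hIq
  set IqΓ := ∫ t in Ioc (0:ℝ) 1, q t * Γ t with hIqΓ
  set IqΓ' := ∫ t in Ioc (0:ℝ) 1, q t * Γ' t with hIqΓ'
  set IΓ2 := ∫ t in Ioc (0:ℝ) 1, (Γ t) ^ 2 with hIΓ2
  set IΓ'2 := ∫ t in Ioc (0:ℝ) 1, (Γ' t) ^ 2 with hIΓ'2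
  set Im := ∫ p in Ioc (0:ℝ) 1, (Γ' p - Γ p) with hIm
  set Is := ∫ p in Ioc (0:ℝ) 1, (Γ' p - Γ p) ^ 2 with hIs
  set Ib := ∫ p in Ioc (0:ℝ) 1, Γ p * (Γ' p - Γ p) with hIb
  set Ie := ∫ p in Ioc (0:ℝ) 1, q p * (Γ' p - Γ p) with hIe
  set IL := ∫ p in Ioc (0:ℝ) 1, (Γ' p - Γ p) * (2 * σ * (q p - Γ p) + ρ) with hIL
  have hΔ_i : IntegrableOn (fun p => Γ' p - Γ p) (Ioc (0:ℝ) 1) := hΓ'_i.sub hΓ_i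
  have hqΔ_i : IntegrableOn (fun p => q p * (Γ' p - Γ p)) (Ioc (0:ℝ) 1) :=
    hbdd _ hq_cont _ hΔ_i
  have hΓΔ_i : IntegrableOn (fun p => Γ p * (Γ' p - Γ p)) (Ioc (0:ℝ) 1) :=
    hbdd _ hΓcont _ hΔ_i
  have hqΓ_i : IntegrableOn (fun p => q p * Γ p) (Ioc (0:ℝ) 1) := hbdd _ hq_cont _ hΓ_i
  have hΓ2_i : IntegrableOn (fun p => (Γ p) ^ 2) (Ioc (0:ℝ) 1) := by
    rw [show (fun p => (Γ p) ^ 2) = (fun p => Γ p * Γ p) from funext fun p => by ring]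
    exact hbdd _ hΓcont _ hΓ_i
  have hΔ2_i : IntegrableOn (fun p => (Γ' p - Γ p) ^ 2) (Ioc (0:ℝ) 1) := by
    rw [show (fun p => (Γ' p - Γ p) ^ 2) = (fun p => (Γ' p - Γ p) * (Γ' p - Γ p))
      from funext fun p => by ring]
    exact hbdd _ hΔcont _ hΔ_i
  have e1 : IΓ' = IΓ + Im := by
    rw [hIΓ', hIΓ, hIm]
    have hs : ∫ t in Ioc (0:ℝ) 1, Γ' t
        = ∫ t in Ioc (0:ℝ) 1, (Γ t + (Γ' t - Γ t)) :=
      setIntegral_congr_fun measurableSet_Ioc (fun p _ => by ring)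
    rw [hs]
    exact integral_add hΓ_i hΔ_i
  have e2 : IqΓ' = IqΓ + Ie := by
    rw [hIqΓ', hIqΓ, hIe]
    have hs : ∫ t in Ioc (0:ℝ) 1, q t * Γ' t
        = ∫ t in Ioc (0:ℝ) 1, (q t * Γ t + q t * (Γ' t - Γ t)) :=
      setIntegral_congr_fun measurableSet_Ioc (fun p _ => by ring)
    rw [hs]
    exact integral_add hqΓ_i hqΔ_i
  have e3 : IΓ'2 = IΓ2 + (2 * Ib + Is) := by
    rw [hIΓ'2, hIΓ2, hIb, hIs]
    have h2ΓΔ_i : IntegrableOn (fun p => 2 * (Γ p * (Γ' p - Γ p))) (Ioc (0:ℝ) 1) :=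
      hΓΔ_i.const_mul 2
    have h1 : ∫ t in Ioc (0:ℝ) 1, (Γ' t) ^ 2
        = ∫ t in Ioc (0:ℝ) 1, ((Γ t) ^ 2 + (2 * (Γ t * (Γ' t - Γ t)) + (Γ' t - Γ t) ^ 2)) :=
      setIntegral_congr_fun measurableSet_Ioc (fun p _ => by ring)
    have h2 : ∫ t in Ioc (0:ℝ) 1, ((Γ t) ^ 2 + (2 * (Γ t * (Γ' t - Γ t)) + (Γ' t - Γ t) ^ 2))
        = (∫ t in Ioc (0:ℝ) 1, (Γ t) ^ 2)
          + ∫ t in Ioc (0:ℝ) 1, (2 * (Γ t * (Γ' t - Γ t)) + (Γ' t - Γ t) ^ 2) :=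
      integral_add hΓ2_i (h2ΓΔ_i.add hΔ2_i)
    have h3 : ∫ t in Ioc (0:ℝ) 1, (2 * (Γ t * (Γ' t - Γ t)) + (Γ' t - Γ t) ^ 2)
        = (∫ t in Ioc (0:ℝ) 1, 2 * (Γ t * (Γ' t - Γ t)))
          + ∫ t in Ioc (0:ℝ) 1, (Γ' t - Γ t) ^ 2 := integral_add h2ΓΔ_i hΔ2_i
    have h4 : ∫ t in Ioc (0:ℝ) 1, 2 * (Γ t * (Γ' t - Γ t))
        = 2 * ∫ t in Ioc (0:ℝ) 1, Γ t * (Γ' t - Γ t) := integral_const_mul 2 _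
    rw [h1, h2, h3, h4]
  have e4 : IL = 2 * σ * Ie - 2 * σ * Ib + ρ * Im := by
    rw [hIL, hIe, hIb, hIm]
    have hc1 : IntegrableOn (fun p => 2 * σ * (q p * (Γ' p - Γ p))) (Ioc (0:ℝ) 1) :=
      hqΔ_i.const_mul (2 * σ)
    have hc2 : IntegrableOn (fun p => 2 * σ * (Γ p * (Γ' p - Γ p))) (Ioc (0:ℝ) 1) :=
      hΓΔ_i.const_mul (2 * σ)
    have hc3 : IntegrableOn (fun p => ρ * (Γ' p - Γ p)) (Ioc (0:ℝ) 1) :=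
      hΔ_i.const_mul ρ
    have hc12 : IntegrableOn
        (fun p => 2 * σ * (q p * (Γ' p - Γ p)) - 2 * σ * (Γ p * (Γ' p - Γ p)))
        (Ioc (0:ℝ) 1) := hc1.sub hc2
    have h1 : ∫ p in Ioc (0:ℝ) 1, (Γ' p - Γ p) * (2 * σ * (q p - Γ p) + ρ)
        = ∫ p in Ioc (0:ℝ) 1, ((2 * σ * (q p * (Γ' p - Γ p)) - 2 * σ * (Γ p * (Γ' p - Γ p)))
            + ρ * (Γ' p - Γ p)) :=
      setIntegral_congr_fun measurableSet_Ioc (fun p _ => by ring)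
    have h2 : ∫ p in Ioc (0:ℝ) 1, ((2 * σ * (q p * (Γ' p - Γ p)) - 2 * σ * (Γ p * (Γ' p - Γ p)))
            + ρ * (Γ' p - Γ p))
        = (∫ p in Ioc (0:ℝ) 1, (2 * σ * (q p * (Γ' p - Γ p)) - 2 * σ * (Γ p * (Γ' p - Γ p))))
          + ∫ p in Ioc (0:ℝ) 1, ρ * (Γ' p - Γ p) := integral_add hc12 hc3
    have h3 : ∫ p in Ioc (0:ℝ) 1, (2 * σ * (q p * (Γ' p - Γ p)) - 2 * σ * (Γ p * (Γ' p - Γ p)))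
        = (∫ p in Ioc (0:ℝ) 1, 2 * σ * (q p * (Γ' p - Γ p)))
          - ∫ p in Ioc (0:ℝ) 1, 2 * σ * (Γ p * (Γ' p - Γ p)) := integral_sub hc1 hc2
    rw [h1, h2, h3, integral_const_mul, integral_const_mul, integral_const_mul]
  have hd'd : d' - d = IL + (σ * Im ^ 2 - σ * Is) := by
    rw [e1, e2, e3] at hol'
    rw [e4, hρ]
    linear_combination hol - hol'
  -- assemble
  rw [hRHSval, hΔW_split, hIBP] at hmono
  have hfinal : (1 / c) * (1 * (d' - d) - (IL - ∫ t in Ioc (0:ℝ) 1,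
      (Γd' t - Γd t) * (Λ 1 - Λ t))) ≤ (σ * Im ^ 2 - σ * Is) / c := by
    rw [hd'd]
    have hQT : (1 / c) * (1 * (IL + (σ * Im ^ 2 - σ * Is)) - (IL - ∫ t in Ioc (0:ℝ) 1,
        (Γd' t - Γd t) * (Λ 1 - Λ t)))
        = ((σ * Im ^ 2 - σ * Is) + ∫ t in Ioc (0:ℝ) 1,
            (Γd' t - Γd t) * (Λ 1 - Λ t)) / c := by ring
    rw [hQT]
    exact (div_le_div_iff_of_pos_right hc).mpr (by linarith)
  linarith

lemma cont_of_rep (Γ Γd : ℝ → ℝ) (hΓd : IntegrableOn Γd (Icc (0:ℝ) 1))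
    (hrep : ∀ p ∈ Icc (0:ℝ) 1, Γ p = Γ 0 + ∫ t in (0:ℝ)..p, Γd t) :
    ContinuousOn Γ (Icc (0:ℝ) 1) := by
  have huIcc : uIcc (0:ℝ) 1 = Icc 0 1 := uIcc_of_le zero_le_one
  have h1 : ContinuousOn (fun p => Γ 0 + ∫ t in (0:ℝ)..p, Γd t) (Icc (0:ℝ) 1) := by
    refine continuousOn_const.add ?_
    have := intervalIntegral.continuousOn_primitive_interval (huIcc ▸ hΓd)
    rwa [huIcc] at this
  exact h1.congr hrep

set_option maxHeartbeats 1600000 in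
lemma Wtot (σ θ k : ℝ) (q h u w : ℝ → ℝ)
    (hq_cont : ContinuousOn q (Icc (0:ℝ) 1))
    (Λ Γ Λd Γd : ℝ → ℝ) (c d ρ : ℝ)
    (hsys : ODESys σ θ k q h u w Λ Γ Λd Γd c d ρ) :
    ∫ p in Ioc (0:ℝ) 1, ((2 * σ * (q p - Γ p) + ρ) - Λd p) = 1 := by
  obtain ⟨hΛd_int, hΓd_int, hΛrep, hΓrep, hae, hΛ0, hΛ1, hΓ0, hol, hρ⟩ := hsys
  have hΓcont : ContinuousOn Γ (Icc (0:ℝ) 1) := cont_of_rep Γ Γd hΓd_int hΓrep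
  have hq_i : IntegrableOn q (Ioc (0:ℝ) 1) :=
    (hq_cont.integrableOn_Icc).mono_set Ioc_subset_Icc_self
  have hΓ_i : IntegrableOn Γ (Ioc (0:ℝ) 1) :=
    (hΓcont.integrableOn_Icc).mono_set Ioc_subset_Icc_self
  have hΛd_i : IntegrableOn Λd (Ioc (0:ℝ) 1) := hΛd_int.mono_set Ioc_subset_Icc_self
  have hqmΓ_i : IntegrableOn (fun p => q p - Γ p) (Ioc (0:ℝ) 1) := hq_i.sub hΓ_i
  have h2σ_i : IntegrableOn (fun p => 2 * σ * (q p - Γ p)) (Ioc (0:ℝ) 1) :=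
    hqmΓ_i.const_mul (2 * σ)
  have hρconst_i : IntegrableOn (fun _ : ℝ => ρ) (Ioc (0:ℝ) 1) :=
    integrableOn_const (by simp)
  have hA_i : IntegrableOn (fun p => 2 * σ * (q p - Γ p) + ρ) (Ioc (0:ℝ) 1) :=
    h2σ_i.add hρconst_i
  have ic : ∀ f : ℝ → ℝ, (∫ t in (0:ℝ)..1, f t) = ∫ t in Ioc (0:ℝ) 1, f t := fun f =>
    intervalIntegral.integral_of_le zero_le_one
  have hΛd_tot : ∫ t in Ioc (0:ℝ) 1, Λd t = θ - 1 := by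
    have h1 := hΛrep 1 (by norm_num)
    rw [ic] at h1
    rw [hΛ1, hΛ0] at h1
    linarith
  have hmass : (volume (Ioc (0:ℝ) 1)).toReal = 1 := by
    rw [Real.volume_Ioc]; norm_num
  have hA_tot : ∫ p in Ioc (0:ℝ) 1, (2 * σ * (q p - Γ p) + ρ) = θ := by
    have hs : ∫ p in Ioc (0:ℝ) 1, (2 * σ * (q p - Γ p) + ρ)
        = (∫ p in Ioc (0:ℝ) 1, 2 * σ * (q p - Γ p)) + ∫ _p in Ioc (0:ℝ) 1, ρ :=
      integral_add h2σ_i hρconst_i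
    rw [hs, integral_const_mul, integral_sub hq_i hΓ_i, setIntegral_const, measureReal_def, hmass]
    rw [hρ, ic Γ, ic q]
    simp only [smul_eq_mul, one_mul]
    ring
  have hs : ∫ p in Ioc (0:ℝ) 1, ((2 * σ * (q p - Γ p) + ρ) - Λd p)
      = (∫ p in Ioc (0:ℝ) 1, (2 * σ * (q p - Γ p) + ρ)) - ∫ p in Ioc (0:ℝ) 1, Λd p :=
    integral_sub hA_i hΛd_i
  rw [hs, hA_tot, hΛd_tot]; ring

set_option maxHeartbeats 1600000 in
theorem stmt_15 (σ θ k : ℝ) (hσ : 0 < σ) (hθ : 0 ≤ θ)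
    (q h : ℝ → ℝ)
    (hh_int : IntegrableOn h (Icc (0:ℝ) 1))
    (hh_nonneg : ∀ᵐ t ∂(volume.restrict (Icc (0:ℝ) 1)), 0 ≤ h t)
    (hq : ∀ p ∈ Icc (0:ℝ) 1, q p = ∫ t in (0:ℝ)..p, h t)
    (m₀ : ℝ) (hm₀ : m₀ ∈ Ico (0:ℝ) 1)
    (hq0 : ∀ p ∈ Icc (0:ℝ) m₀, q p = 0)
    (hhpos : ∀ᵐ t ∂(volume.restrict (Ioo m₀ 1)), 0 < h t)
    (u : ℝ → ℝ) (hu_conc : ConcaveOn ℝ univ u) (hu_mono : StrictMono u)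
    (hu_diff : Differentiable ℝ u)
    (μ : Measure ℝ) [IsProbabilityMeasure μ] (hμ0 : μ {0} = 0)
    (hμsupp : μ (Icc (0:ℝ) 1)ᶜ = 0)
    (w : ℝ → ℝ) (hw_meas : Measurable w)
    (hw_nonneg : ∀ᵐ t ∂(volume.restrict (Icc (0:ℝ) 1)), 0 ≤ w t)
    (hμw : μ = (volume.restrict (Icc (0:ℝ) 1)).withDensity (fun t => ENNReal.ofReal (w t)))
    (Λ₁ Γ₁ Λd₁ Γd₁ : ℝ → ℝ) (c₁ d₁ ρ₁ : ℝ) (hc₁ : 0 < c₁)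
    (hsys₁ : ODESys σ θ k q h u w Λ₁ Γ₁ Λd₁ Γd₁ c₁ d₁ ρ₁)
    (Λ₂ Γ₂ Λd₂ Γd₂ : ℝ → ℝ) (c₂ d₂ ρ₂ : ℝ) (hc₂ : 0 < c₂)
    (hsys₂ : ODESys σ θ k q h u w Λ₂ Γ₂ Λd₂ Γd₂ c₂ d₂ ρ₂) :
    (∀ p ∈ Icc (0:ℝ) 1, Λ₁ p = Λ₂ p ∧ Γ₁ p = Γ₂ p) ∧
      c₁ = c₂ ∧ d₁ = d₂ ∧ ρ₁ = ρ₂ := by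
  have hcopy₁ := hsys₁
  have hcopy₂ := hsys₂
  obtain ⟨hΛd1, hΓd1, hΛrep1, hΓrep1, hae1, hΛ01, hΛ11, hΓ01, hol1, hρ1⟩ := hcopy₁
  obtain ⟨hΛd2, hΓd2, hΛrep2, hΓrep2, hae2, hΛ02, hΛ12, hΓ02, hol2, hρ2⟩ := hcopy₂
  have huIcc : uIcc (0:ℝ) 1 = Icc 0 1 := uIcc_of_le zero_le_one
  have hq_cont : ContinuousOn q (Icc (0:ℝ) 1) := by
    have h1 : ContinuousOn (fun p => ∫ t in (0:ℝ)..p, h t) (Icc (0:ℝ) 1) := by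
      have := intervalIntegral.continuousOn_primitive_interval (huIcc ▸ hh_int)
      rwa [huIcc] at this
    exact h1.congr hq
  -- w is integrable on [0,1]
  have hw_intIcc : IntegrableOn w (Icc (0:ℝ) 1) := by
    have h1 : μ univ = 1 := measure_univ
    rw [hμw, withDensity_apply _ MeasurableSet.univ, Measure.restrict_univ] at h1
    refine ⟨hw_meas.aestronglyMeasurable, ?_⟩
    rw [hasFiniteIntegral_iff_ofReal hw_nonneg, h1]
    exact ENNReal.one_lt_top
  have hw1_int : IntegrableOn (fun p => w (1 - p)) (Ioc (0:ℝ) 1) := by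
    have h2 : IntervalIntegrable w volume 0 1 :=
      (intervalIntegrable_iff_integrableOn_Ioc_of_le zero_le_one).mpr
        (hw_intIcc.mono_set Ioc_subset_Icc_self)
    have h3 := (h2.comp_sub_left 1).symm
    have h4 : IntervalIntegrable (fun x => w (1 - x)) volume 0 1 := by simpa using h3
    exact (intervalIntegrable_iff_integrableOn_Ioc_of_le zero_le_one).mp h4
  have hmp : MeasurePreserving (fun x : ℝ => 1 - x) volume volume := by
    have h1 : MeasurePreserving (fun x : ℝ => 1 + x) volume volume :=
      measurePreserving_add_left volume 1
    have h2 : MeasurePreserving (fun x : ℝ => -x) volume volume :=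
      Measure.measurePreserving_neg volume
    have h3 := h1.comp h2
    have h4 : ((fun x : ℝ => 1 + x) ∘ fun x : ℝ => -x) = fun x : ℝ => 1 - x := by
      funext x; simp [sub_eq_add_neg]
    rwa [h4] at h3
  have hw1_nonneg : ∀ᵐ p ∂(volume.restrict (Ioc (0:ℝ) 1)), 0 ≤ w (1 - p) := by
    have hNmeas : MeasurableSet ({t : ℝ | w t < 0} ∩ Icc (0:ℝ) 1) :=
      (hw_meas measurableSet_Iio).inter measurableSet_Icc
    have hnull : volume ({t : ℝ | w t < 0} ∩ Icc (0:ℝ) 1) = 0 := by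
      have h5 := hw_nonneg
      rw [ae_iff, Measure.restrict_apply₀' measurableSet_Icc.nullMeasurableSet] at h5
      convert h5 using 2
      ext t; simp [not_le]
    rw [ae_iff, Measure.restrict_apply₀' measurableSet_Ioc.nullMeasurableSet]
    refine measure_mono_null (fun p hp => ?_)
      (by rw [hmp.measure_preimage hNmeas.nullMeasurableSet]; exact hnull)
    obtain ⟨hp1, hp2⟩ := hp
    simp only [mem_preimage, mem_inter_iff, mem_setOf_eq, mem_Icc]
    refine ⟨not_le.mp hp1, by linarith [hp2.2], by linarith [hp2.1.le]⟩
  -- apply the key inequality both ways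
  have hk12 := key_ineq σ θ k hσ q h u w hh_nonneg hq_cont hu_conc hu_diff hw1_int
    hw1_nonneg Λ₁ Γ₁ Λd₁ Γd₁ c₁ d₁ ρ₁ hc₁ hsys₁ Λ₂ Γ₂ Λd₂ Γd₂ c₂ d₂ ρ₂ hsys₂
  have hk21 := key_ineq σ θ k hσ q h u w hh_nonneg hq_cont hu_conc hu_diff hw1_int
    hw1_nonneg Λ₂ Γ₂ Λd₂ Γd₂ c₂ d₂ ρ₂ hc₂ hsys₂ Λ₁ Γ₁ Λd₁ Γd₁ c₁ d₁ ρ₁ hsys₁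
  have hΓcont₁ : ContinuousOn Γ₁ (Icc (0:ℝ) 1) := cont_of_rep _ _ hΓd1 hΓrep1
  have hΓcont₂ : ContinuousOn Γ₂ (Icc (0:ℝ) 1) := cont_of_rep _ _ hΓd2 hΓrep2
  have hΔcont : ContinuousOn (fun p => Γ₂ p - Γ₁ p) (Icc (0:ℝ) 1) := hΓcont₂.sub hΓcont₁
  have hΔ_i : IntegrableOn (fun p => Γ₂ p - Γ₁ p) (Ioc (0:ℝ) 1) :=
    (hΔcont.integrableOn_Icc).mono_set Ioc_subset_Icc_self
  have hΔ2_i : IntegrableOn (fun p => (Γ₂ p - Γ₁ p) ^ 2) (Ioc (0:ℝ) 1) :=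
    ((hΔcont.pow 2).integrableOn_Icc).mono_set Ioc_subset_Icc_self
  have hmneg : ∫ p in Ioc (0:ℝ) 1, (Γ₁ p - Γ₂ p)
      = - ∫ p in Ioc (0:ℝ) 1, (Γ₂ p - Γ₁ p) := by
    rw [← integral_neg]
    exact setIntegral_congr_fun measurableSet_Ioc (fun p _ => by ring)
  have hsneg : ∫ p in Ioc (0:ℝ) 1, (Γ₁ p - Γ₂ p) ^ 2
      = ∫ p in Ioc (0:ℝ) 1, (Γ₂ p - Γ₁ p) ^ 2 :=
    setIntegral_congr_fun measurableSet_Ioc (fun p _ => by ring)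
  rw [hmneg, hsneg] at hk21
  set m := ∫ p in Ioc (0:ℝ) 1, (Γ₂ p - Γ₁ p) with hmdef
  set s := ∫ p in Ioc (0:ℝ) 1, (Γ₂ p - Γ₁ p) ^ 2 with hsdef
  have hfix : σ * (-m) ^ 2 - σ * s = σ * m ^ 2 - σ * s := by ring
  rw [hfix] at hk21
  have hsum : 0 ≤ (σ * m ^ 2 - σ * s) / c₁ + (σ * m ^ 2 - σ * s) / c₂ := by
    linarith [hk12, hk21]
  have hmass : (volume (Ioc (0:ℝ) 1)).toReal = 1 := by rw [Real.volume_Ioc]; norm_num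
  have hvar_int : IntegrableOn (fun p => ((Γ₂ p - Γ₁ p) - m) ^ 2) (Ioc (0:ℝ) 1) :=
    (((hΔcont.sub continuousOn_const).pow 2).integrableOn_Icc).mono_set Ioc_subset_Icc_self
  have hvar_exp : ∫ p in Ioc (0:ℝ) 1, ((Γ₂ p - Γ₁ p) - m) ^ 2 = s - m ^ 2 := by
    have hc2m : IntegrableOn (fun p => 2 * m * (Γ₂ p - Γ₁ p)) (Ioc (0:ℝ) 1) :=
      hΔ_i.const_mul (2 * m)
    have hconst : IntegrableOn (fun _ : ℝ => m ^ 2) (Ioc (0:ℝ) 1) :=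
      integrableOn_const (by simp)
    have h1 : ∫ p in Ioc (0:ℝ) 1, ((Γ₂ p - Γ₁ p) - m) ^ 2
        = ∫ p in Ioc (0:ℝ) 1, (((Γ₂ p - Γ₁ p) ^ 2 - 2 * m * (Γ₂ p - Γ₁ p)) + m ^ 2) :=
      setIntegral_congr_fun measurableSet_Ioc (fun p _ => by ring)
    have h2 : ∫ p in Ioc (0:ℝ) 1, (((Γ₂ p - Γ₁ p) ^ 2 - 2 * m * (Γ₂ p - Γ₁ p)) + m ^ 2)
        = (∫ p in Ioc (0:ℝ) 1, ((Γ₂ p - Γ₁ p) ^ 2 - 2 * m * (Γ₂ p - Γ₁ p)))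
          + ∫ _p in Ioc (0:ℝ) 1, m ^ 2 := integral_add (hΔ2_i.sub hc2m) hconst
    have h3 : ∫ p in Ioc (0:ℝ) 1, ((Γ₂ p - Γ₁ p) ^ 2 - 2 * m * (Γ₂ p - Γ₁ p))
        = (∫ p in Ioc (0:ℝ) 1, (Γ₂ p - Γ₁ p) ^ 2)
          - ∫ p in Ioc (0:ℝ) 1, 2 * m * (Γ₂ p - Γ₁ p) := integral_sub hΔ2_i hc2m
    rw [h1, h2, h3, integral_const_mul, setIntegral_const, measureReal_def, hmass]
    simp only [smul_eq_mul, one_mul]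
    rw [← hmdef, ← hsdef]
    ring
  have hvar_nonneg : 0 ≤ ∫ p in Ioc (0:ℝ) 1, ((Γ₂ p - Γ₁ p) - m) ^ 2 :=
    integral_nonneg (fun p => sq_nonneg _)
  have hseq : s = m ^ 2 := by
    have h1 : 0 ≤ σ * m ^ 2 - σ * s := by
      by_contra hcon
      push_neg at hcon
      have hd1 : (σ * m ^ 2 - σ * s) / c₁ < 0 := div_neg_of_neg_of_pos hcon hc₁
      have hd2 : (σ * m ^ 2 - σ * s) / c₂ < 0 := div_neg_of_neg_of_pos hcon hc₂
      linarith
    nlinarith [hvar_exp, hvar_nonneg]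
  have hzero : ∫ p in Ioc (0:ℝ) 1, ((Γ₂ p - Γ₁ p) - m) ^ 2 = 0 := by
    rw [hvar_exp, hseq]; ring
  have haeΔ' : ∀ᵐ p ∂(volume.restrict (Ioc (0:ℝ) 1)), Γ₂ p - Γ₁ p - m = 0 := by
    have h5 := (integral_eq_zero_iff_of_nonneg_ae
      (Filter.Eventually.of_forall (fun p => sq_nonneg ((Γ₂ p - Γ₁ p) - m))) hvar_int).mp hzero
    filter_upwards [h5] with p hp
    have : ((Γ₂ p - Γ₁ p) - m) ^ 2 = 0 := hp
    have := pow_eq_zero_iff (n := 2) (by norm_num) |>.mp this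
    linarith
  have hΔ_eq : ∀ p ∈ Icc (0:ℝ) 1, (fun p => Γ₂ p - Γ₁ p) p = m := by
    refine ae_const_of_contOn hΔcont ?_
    filter_upwards [haeΔ'] with p hp
    simpa using by linarith
  have hm0 : m = 0 := by
    have h5 := hΔ_eq 0 (by norm_num)
    simp only at h5
    rw [hΓ01, hΓ02] at h5
    linarith
  have hΓeq : ∀ p ∈ Icc (0:ℝ) 1, Γ₁ p = Γ₂ p := by
    intro p hp
    have h5 := hΔ_eq p hp
    rw [hm0] at h5
    simp only at h5
    linarith
  -- equality of the integrals appearing in ol and ρ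
  have hIΓeq : (∫ t in (0:ℝ)..1, Γ₁ t) = ∫ t in (0:ℝ)..1, Γ₂ t :=
    intervalIntegral.integral_congr (by rw [huIcc]; exact fun p hp => hΓeq p hp)
  have hρeq : ρ₁ = ρ₂ := by rw [hρ1, hρ2, hIΓeq]
  have hI2 : (∫ t in (0:ℝ)..1, (Γ₁ t) ^ 2) = ∫ t in (0:ℝ)..1, (Γ₂ t) ^ 2 :=
    intervalIntegral.integral_congr
      (by rw [huIcc]; exact fun p hp => by simp only; rw [hΓeq p hp])
  have hI3 : (∫ t in (0:ℝ)..1, q t * Γ₁ t) = ∫ t in (0:ℝ)..1, q t * Γ₂ t :=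
    intervalIntegral.integral_congr
      (by rw [huIcc]; exact fun p hp => by simp only; rw [hΓeq p hp])
  have hdeq : d₁ = d₂ := by
    rw [← hol1, ← hol2]
    unfold ol
    rw [hIΓeq, hI2, hI3]
  -- equality of c
  have hW1tot := Wtot σ θ k q h u w hq_cont Λ₁ Γ₁ Λd₁ Γd₁ c₁ d₁ ρ₁ hsys₁
  have hW2tot := Wtot σ θ k q h u w hq_cont Λ₂ Γ₂ Λd₂ Γd₂ c₂ d₂ ρ₂ hsys₂
  have hae1ν := ae_restrict_of_ae_restrict_of_subset Ioc_subset_Icc_self hae1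
  have hae2ν := ae_restrict_of_ae_restrict_of_subset Ioc_subset_Icc_self hae2
  have haeW1 : ∀ᵐ p ∂(volume.restrict (Ioc (0:ℝ) 1)),
      (2 * σ * (q p - Γ₁ p) + ρ₁) - Λd₁ p
      = c₁ * (deriv u (d₁ - Γ₁ p) * w (1 - p)) := by
    filter_upwards [hae1ν] with p hp
    rw [hp.2]; ring
  have haeW2 : ∀ᵐ p ∂(volume.restrict (Ioc (0:ℝ) 1)),
      (2 * σ * (q p - Γ₂ p) + ρ₂) - Λd₂ p
      = c₂ * (deriv u (d₁ - Γ₁ p) * w (1 - p)) := by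
    filter_upwards [hae2ν, ae_restrict_mem measurableSet_Ioc] with p hp hpm
    rw [hp.2, ← hΓeq p (Ioc_subset_Icc_self hpm), ← hdeq]
    ring
  have h1 : ∫ p in Ioc (0:ℝ) 1, c₁ * (deriv u (d₁ - Γ₁ p) * w (1 - p)) = 1 := by
    rw [← integral_congr_ae haeW1]
    exact hW1tot
  have h2 : ∫ p in Ioc (0:ℝ) 1, c₂ * (deriv u (d₁ - Γ₁ p) * w (1 - p)) = 1 := by
    rw [← integral_congr_ae haeW2]
    exact hW2tot
  rw [integral_const_mul] at h1 h2
  have hceq : c₁ = c₂ := by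
    have hU0 : (∫ p in Ioc (0:ℝ) 1, deriv u (d₁ - Γ₁ p) * w (1 - p)) ≠ 0 := by
      intro h0
      rw [h0, mul_zero] at h1
      exact one_ne_zero h1.symm
    exact mul_right_cancel₀ hU0 (h1.trans h2.symm)
  -- equality of Λ
  have haeΛd : ∀ᵐ p ∂(volume.restrict (Ioc (0:ℝ) 1)), Λd₁ p = Λd₂ p := by
    filter_upwards [hae1ν, hae2ν, ae_restrict_mem measurableSet_Ioc] with p hp1 hp2 hpm
    rw [hp1.2, hp2.2, ← hΓeq p (Ioc_subset_Icc_self hpm), ← hdeq, ← hρeq, ← hceq]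
  have hΛeq : ∀ p ∈ Icc (0:ℝ) 1, Λ₁ p = Λ₂ p := by
    intro p hp
    rw [hΛrep1 p hp, hΛrep2 p hp, hΛ01, hΛ02]
    congr 1
    rw [intervalIntegral.integral_of_le hp.1, intervalIntegral.integral_of_le hp.1]
    refine setIntegral_congr_ae measurableSet_Ioc ?_
    have h5 := (ae_restrict_iff' measurableSet_Ioc).mp haeΛd
    filter_upwards [h5] with x hx
    intro hxm
    exact hx ⟨hxm.1, hxm.2.trans hp.2⟩
  exact ⟨fun p hp => ⟨hΛeq p hp, hΓeq p hp⟩, hceq, hdeq, hρeq⟩
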